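/- Let n_T, n_R ≥ 1, let k, d ∈ ℝ, and let θ_1,…,θ_{n_T}, φ_1,…,φ_{n_T} ∈ ℝ. Define H_{m,j} = (1/√(n_T n_R)) · exp(i·k·m·d·sin(θ_j)·sin(φ_j)) for m = 0,…,n_R−1, set W = H† H, and for i, j ∈ {1,…,n_T} set γ_{ij} = sin(θ_j)·sin(φ_j) − sin(θ_i)·sin(φ_i). Then for all i, j, the entry w_{ij} of W satisfies w_{ij}·conj(w_{ij}) = (1/(n_R n_T)²) · ( n_R + 2 · Σ_{s=1}^{n_R−1} (n_R − s) · cos(s·k·d·γ_{ij}) ). -/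

import Mathlib

/-! With α = k d γ_ij, the entry w_ij is 1/(n_T n_R) times the phase sum S_n = Σ_{m<n} e^{imα},
n = n_R. Peeling off the first term, S_{n+1} = 1 + e^{iα} S_n, so
|S_{n+1}|² = 1 + |S_n|² + 2 Σ_{s=1}^{n} cos(sα), and induction gives
|S_n|² = n + 2 Σ_{s=1}^{n-1} (n - s) cos(sα). -/

open Complex Finset

noncomputable def phaseSum (α : ℝ) (n : ℕ) : ℂ :=
  ∑ m ∈ range n, exp ((m * α : ℝ) * I)

lemma phaseSum_succ (α : ℝ) (n : ℕ) :
    phaseSum α (n + 1) = 1 + exp (α * I) * phaseSum α n := by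
  rw [phaseSum, sum_range_succ', phaseSum, mul_sum]
  simp only [← exp_add]
  push_cast
  rw [add_comm]
  congr 1
  · simp
  · refine sum_congr rfl fun m _ => ?_
    ring_nf

lemma re_exp_mul_phaseSum (α : ℝ) (n : ℕ) :
    (exp (α * I) * phaseSum α n).re = ∑ s ∈ Ico 1 (n + 1), Real.cos (s * α) := by
  rw [phaseSum, mul_sum, re_sum, sum_Ico_eq_sum_range, Nat.add_sub_cancel]
  refine sum_congr rfl fun m _ => ?_
  rw [← exp_add, ← add_mul, ← ofReal_add, exp_ofReal_mul_I_re]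
  push_cast
  ring_nf

lemma normSq_phaseSum (α : ℝ) (n : ℕ) :
    normSq (phaseSum α n) = n + 2 * ∑ s ∈ Ico 1 n, ((n : ℝ) - s) * Real.cos (s * α) := by
  induction n with
  | zero => simp [phaseSum]
  | succ n ih =>
    have top_vanishes : ∑ s ∈ Ico 1 (n + 1), ((n : ℝ) - s) * Real.cos (s * α) =
        ∑ s ∈ Ico 1 n, ((n : ℝ) - s) * Real.cos (s * α) := by
      refine (sum_subset (Ico_subset_Ico_right n.le_succ) fun s hs hs' => ?_).symm
      have : s = n := by simp only [mem_Ico] at hs hs'; omega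
      simp [this]
    rw [phaseSum_succ, add_comm 1, normSq_add, map_one (starRingEnd ℂ), mul_one, normSq_one,
      normSq_mul, normSq_eq_norm_sq (exp _), norm_exp_ofReal_mul_I, one_pow, one_mul, re_exp_mul_phaseSum, ih]
    have weights_succ : ∑ s ∈ Ico 1 (n + 1), ((↑(n + 1) : ℝ) - s) * Real.cos (s * α) =
        ∑ s ∈ Ico 1 (n + 1), ((n : ℝ) - s) * Real.cos (s * α) +
          ∑ s ∈ Ico 1 (n + 1), Real.cos (s * α) := by
      rw [← sum_add_distrib]
      refine sum_congr rfl fun s _ => ?_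
      push_cast; ring
    rw [weights_succ, top_vanishes]
    push_cast
    ring

lemma conj_mul_exp_mul_I (c a b : ℝ) :
    starRingEnd ℂ (c * exp (a * I)) * (c * exp (b * I)) = (c ^ 2 : ℝ) * exp ((b - a : ℝ) * I) := by
  rw [map_mul, conj_ofReal, ← exp_conj, map_mul, conj_ofReal, conj_I]
  push_cast
  rw [sub_mul, sub_eq_neg_add, exp_add]
  ring_nf

open Matrix

theorem entry_mul_conj_entry_of_satcom_W (nT nR : ℕ)
    (k d : ℝ) (θ φ : Fin nT → ℝ)
    (H : Matrix (Fin nR) (Fin nT) ℂ)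
    (hH : ∀ (m : Fin nR) (j : Fin nT),
      H m j = (1 / Real.sqrt (nT * nR) : ℝ) *
        Complex.exp (Complex.I * k * (m : ℕ) * d * Real.sin (θ j) * Real.sin (φ j)))
    (W : Matrix (Fin nT) (Fin nT) ℂ) (hW : W = Hᴴ * H)
    (γ : Fin nT → Fin nT → ℝ)
    (hγ : ∀ i j, γ i j = Real.sin (θ j) * Real.sin (φ j) - Real.sin (θ i) * Real.sin (φ i)) :
    ∀ i j : Fin nT,
      W i j * (starRingEnd ℂ) (W i j) =
        ((1 / ((nR : ℝ) * nT) ^ 2) *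
          ((nR : ℝ) + 2 * ∑ s ∈ Finset.Icc 1 (nR - 1),
            ((nR : ℝ) - s) * Real.cos (s * k * d * γ i j)) : ℝ) := by
  intro i j
  have hH_phase : ∀ (m : Fin nR) (j : Fin nT), H m j = (1 / Real.sqrt (nT * nR) : ℝ) *
      exp ((k * m * d * (Real.sin (θ j) * Real.sin (φ j)) : ℝ) * I) := fun m j => by
    rw [hH]; push_cast; ring_nf
  have entry : W i j = (1 / (nT * nR) : ℝ) * phaseSum (k * d * γ i j) nR := by
    rw [hW, mul_apply, phaseSum, ← Fin.sum_univ_eq_sum_range, mul_sum]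
    refine sum_congr rfl fun m _ => ?_
    rw [conjTranspose_apply, hH_phase, hH_phase, Complex.star_def, conj_mul_exp_mul_I, div_pow, one_pow,
      Real.sq_sqrt (by positivity), hγ]
    ring_nf
  have Icc_eq_Ico : Icc 1 (nR - 1) = Ico 1 nR := by ext; simp only [mem_Icc, mem_Ico]; omega
  rw [entry, mul_conj, normSq_mul, normSq_ofReal, normSq_phaseSum, Icc_eq_Ico]
  simp only [← mul_assoc]
  congr 1
  ring
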